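/- arXiv:2210.08892 — 5 statements merged into one kernel-verified Lean document; each statement's English description precedes it below -/
import Mathlib

section
/- The area between the ODC R and the diagonal where R exceeds it equals an integral against F2: ∫₀¹ max{R(u) − u, 0} du = ∫_ℝ max{F1(x) − F2(x), 0} dF2(x). -/
/-!
The quantile function `Q₂` pushes the uniform distribution on `(0, 1)` forward to `dF₂`,
because `Q₂ u ≤ x ↔ u ≤ F₂ x`. Since `F₂` is continuous, `F₂ (Q₂ u) = u`, so the integrand
`R u - u` on the left is `(F₁ - F₂) (Q₂ u)`, and the identity is the change of variables
`x = Q₂ u`.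
-/

open Set Filter MeasureTheory Topology

namespace StieltjesFunction

variable (f : StieltjesFunction ℝ)

noncomputable def quantile (u : ℝ) : ℝ := sInf {x | u ≤ f x}

lemma le_apply_quantile {u : ℝ} (hne : {x | u ≤ f x}.Nonempty)
    (hbdd : BddBelow {x | u ≤ f x}) : u ≤ f (f.quantile u) := by
  have : (𝓝[{x | u ≤ f x}] f.quantile u).NeBot :=
    mem_closure_iff_nhdsWithin_neBot.mp (csInf_mem_closure hne hbdd)
  have hle : 𝓝[{x | u ≤ f x}] f.quantile u ≤ 𝓝[Ici (f.quantile u)] f.quantile u :=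
    nhdsWithin_mono _ fun x hx => csInf_le hbdd hx
  exact ge_of_tendsto ((f.right_continuous _).tendsto.mono_left hle) self_mem_nhdsWithin

variable {f}

lemma nonempty_setOf_le_apply (htop : Tendsto f atTop (𝓝 1)) {u : ℝ} (hu : u < 1) :
    {x | u ≤ f x}.Nonempty :=
  (htop.eventually_const_le hu).exists

lemma bddBelow_setOf_le_apply (hbot : Tendsto f atBot (𝓝 0)) {u : ℝ} (hu : 0 < u) :
    BddBelow {x | u ≤ f x} := by
  obtain ⟨a, ha⟩ := (hbot.eventually_lt_const hu).exists
  exact ⟨a, fun x hx => le_of_not_gt fun hxa =>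
    (hx.trans_lt ((f.mono hxa.le).trans_lt ha)).false⟩

lemma quantile_le_iff (hbot : Tendsto f atBot (𝓝 0)) (htop : Tendsto f atTop (𝓝 1))
    {u : ℝ} (hu : u ∈ Ioo 0 1) (x : ℝ) : f.quantile u ≤ x ↔ u ≤ f x :=
  ⟨fun h => (f.le_apply_quantile (nonempty_setOf_le_apply htop hu.2)
    (bddBelow_setOf_le_apply hbot hu.1)).trans (f.mono h),
   fun h => csInf_le (bddBelow_setOf_le_apply hbot hu.1) h⟩

lemma apply_quantile (hf : Continuous f) (hbot : Tendsto f atBot (𝓝 0))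
    (htop : Tendsto f atTop (𝓝 1)) {u : ℝ} (hu : u ∈ Ioo 0 1) : f (f.quantile u) = u := by
  refine le_antisymm ?_ (f.le_apply_quantile (nonempty_setOf_le_apply htop hu.2)
    (bddBelow_setOf_le_apply hbot hu.1))
  have hlt : ∀ y ∈ Iio (f.quantile u), f y ≤ u := fun y hy =>
    le_of_not_ge fun h => hy.not_ge ((quantile_le_iff hbot htop hu y).2 h)
  exact le_of_tendsto ((hf.tendsto _).mono_left nhdsWithin_le_nhds)
    (eventually_nhdsWithin_of_forall hlt)

lemma monotoneOn_quantile (hbot : Tendsto f atBot (𝓝 0)) (htop : Tendsto f atTop (𝓝 1)) :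
    MonotoneOn f.quantile (Ioo 0 1) := fun _ hu _ hv huv =>
  csInf_le_csInf (bddBelow_setOf_le_apply hbot hu.1) (nonempty_setOf_le_apply htop hv.2)
    fun _ hx => huv.trans hx

lemma aemeasurable_quantile (hbot : Tendsto f atBot (𝓝 0)) (htop : Tendsto f atTop (𝓝 1)) :
    AEMeasurable f.quantile (volume.restrict (Ioo 0 1)) :=
  aemeasurable_restrict_of_monotoneOn measurableSet_Ioo (monotoneOn_quantile hbot htop)

lemma map_quantile_volume (hbot : Tendsto f atBot (𝓝 0)) (htop : Tendsto f atTop (𝓝 1)) :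
    (volume.restrict (Ioo (0 : ℝ) 1)).map f.quantile = f.measure := by
  have := f.isProbabilityMeasure hbot htop
  refine Measure.ext_of_Iic _ _ fun x => ?_
  have hpre : f.quantile ⁻¹' Iic x ∩ Ioo 0 1 = Iic (f x) ∩ Ioo 0 1 := by
    ext u
    simp only [mem_inter_iff, mem_preimage, mem_Iic, and_congr_left_iff]
    exact fun hu => quantile_le_iff hbot htop hu x
  rw [Measure.map_apply_of_aemeasurable (aemeasurable_quantile hbot htop) measurableSet_Iic,
    f.measure_Iic hbot, sub_zero, Measure.restrict_apply' measurableSet_Ioo, hpre]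
  rw [← Measure.restrict_apply' measurableSet_Ioo, Measure.restrict_congr_set Ioo_ae_eq_Ioc,
    Measure.restrict_apply' measurableSet_Ioc,
    Iic_inter_Ioc_of_le (f.mono.ge_of_tendsto htop x), Real.volume_Ioc, sub_zero]

end StieltjesFunction

theorem stmt1_general (F1 : ℝ → ℝ) (f2 : StieltjesFunction ℝ)
    (hF1c : Continuous F1)
    (hf2c : Continuous (f2 : ℝ → ℝ))
    (hf2bot : Tendsto (f2 : ℝ → ℝ) atBot (nhds 0))
    (hf2top : Tendsto (f2 : ℝ → ℝ) atTop (nhds 1))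
    (Q2 : ℝ → ℝ) (hQ2 : ∀ u, Q2 u = sInf {x : ℝ | u ≤ f2 x})
    (R : ℝ → ℝ) (hR : ∀ u, R u = F1 (Q2 u)) :
    ∫ u in Ioo (0:ℝ) 1, max (R u - u) 0
      = ∫ x, max (F1 x - f2 x) 0 ∂ f2.measure := by
  obtain rfl : Q2 = f2.quantile := funext hQ2
  set g : ℝ → ℝ := fun x => max (F1 x - f2 x) 0
  have hRg : EqOn (fun u => max (R u - u) 0) (g ∘ f2.quantile) (Ioo 0 1) := fun u hu => by
    simp only [g, Function.comp_apply, hR, f2.apply_quantile hf2c hf2bot hf2top hu]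
  rw [setIntegral_congr_fun measurableSet_Ioo hRg, ← f2.map_quantile_volume hf2bot hf2top]
  exact (integral_map (f2.aemeasurable_quantile hf2bot hf2top)
    (by fun_prop : Continuous g).aestronglyMeasurable).symm

/-- `∫₀¹ max (R u − u) 0 du = ∫ max (F1 x − F2 x) 0 dF2(x)`,
where the right-hand side is a Lebesgue–Stieltjes integral with respect to `F2`. -/
theorem stmt1 (F1 : ℝ → ℝ) (f2 : StieltjesFunction ℝ)
    (hF1c : Continuous F1) (hF1m : Monotone F1)
    (hf2c : Continuous (f2 : ℝ → ℝ))
    (hF1bot : Tendsto F1 atBot (nhds 0)) (hF1top : Tendsto F1 atTop (nhds 1))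
    (hf2bot : Tendsto (f2 : ℝ → ℝ) atBot (nhds 0))
    (hf2top : Tendsto (f2 : ℝ → ℝ) atTop (nhds 1))
    (Q2 : ℝ → ℝ) (hQ2 : ∀ u, Q2 u = sInf {x : ℝ | u ≤ f2 x})
    (R : ℝ → ℝ) (hR : ∀ u, R u = F1 (Q2 u)) :
    ∫ u in Ioo (0:ℝ) 1, max (R u - u) 0
      = ∫ x, max (F1 x - f2 x) 0 ∂ f2.measure :=
  stmt1_general F1 f2 hF1c hf2c hf2bot hf2top Q2 hQ2 R hR
end

section
/- The functional F : L¹(0,1) → ℝ, F(h) = ∫₀¹ max{h(u) − u, 0} du, is Hadamard directionally differentiable at every R ∈ L¹(0,1), with directional derivative F'_R(h) = ∫_{B₊(R)} h(u) du + ∫_{B₀(R)} max{h(u), 0} du, where B₊(R) = {u : R(u) > u} and B₀(R) = {u : R(u) = u}. -/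
open Set Filter MeasureTheory

/-- Hadamard directional differentiability of
`𝓕(h) = ∫₀¹ max (h u − u) 0 du` at any `R ∈ L¹(0,1)`, with directional derivative
`𝓕'_R(h) = ∫_{B₊(R)} h + ∫_{B₀(R)} max h 0`, where `B₊(R) = {u | R u > u}`
and `B₀(R) = {u | R u = u}`: for all `tₙ ↓ 0` and `hₙ → h` in `L¹(0,1)`,
`(𝓕(R + tₙ hₙ) − 𝓕(R)) / tₙ → 𝓕'_R(h)`. -/
theorem stmt6 (R : ℝ → ℝ) (hRm : Measurable R) (hR : IntegrableOn R (Ioo (0:ℝ) 1))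
    (h : ℝ → ℝ) (hh : IntegrableOn h (Ioo (0:ℝ) 1))
    (t : ℕ → ℝ) (ht_pos : ∀ n, 0 < t n) (ht_anti : Antitone t)
    (ht : Tendsto t atTop (nhds 0))
    (hseq : ℕ → ℝ → ℝ) (hhseq : ∀ n, IntegrableOn (hseq n) (Ioo (0:ℝ) 1))
    (hhconv : Tendsto (fun n => ∫ u in Ioo (0:ℝ) 1, |hseq n u - h u|) atTop (nhds 0)) :
    Tendsto (fun n =>
        ((∫ u in Ioo (0:ℝ) 1, max (R u + t n * hseq n u - u) 0)
          - ∫ u in Ioo (0:ℝ) 1, max (R u - u) 0) / t n) atTop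
      (nhds ((∫ u in Ioo (0:ℝ) 1 ∩ {u | u < R u}, h u)
        + ∫ u in Ioo (0:ℝ) 1 ∩ {u | R u = u}, max (h u) 0)) := by
  set I : Set ℝ := Ioo (0:ℝ) 1 with hIdef
  -- integrability facts
  have hid : IntegrableOn (fun u : ℝ => u) I :=
    (continuous_id.integrableOn_Icc (a := (0:ℝ)) (b := 1)).mono_set Ioo_subset_Icc_self
  have hmax0 : IntegrableOn (fun u => max (R u - u) 0) I := (hR.sub hid).pos_part
  have hFn : ∀ (n : ℕ) (k : ℝ → ℝ), IntegrableOn k I →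
      IntegrableOn (fun u => max (R u + t n * k u - u) 0) I := by
    intro n k hk
    exact ((hR.add (hk.const_mul (t n))).sub hid).pos_part
  -- the two sequences of integrands
  set A : ℕ → ℝ → ℝ :=
    fun n u => (max (R u + t n * hseq n u - u) 0 - max (R u - u) 0) / t n with hA
  set D : ℕ → ℝ → ℝ :=
    fun n u => (max (R u + t n * h u - u) 0 - max (R u - u) 0) / t n with hD
  have hAint : ∀ n, IntegrableOn (A n) I :=
    fun n => ((hFn n _ (hhseq n)).sub hmax0).div_const _
  have hDint : ∀ n, IntegrableOn (D n) I :=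
    fun n => ((hFn n _ hh).sub hmax0).div_const _
  -- limit function
  set φ : ℝ → ℝ := fun u => {u | u < R u}.indicator h u
      + {u | R u = u}.indicator (fun v => max (h v) 0) u with hφ
  -- pointwise convergence of D n to φ
  have hlim_pt : ∀ u : ℝ, Tendsto (fun n => D n u) atTop (nhds (φ u)) := by
    intro u
    rcases lt_trichotomy u (R u) with hu | hu | hu
    · -- u < R u
      have hφu : φ u = h u := by
        simp [hφ, Set.indicator_of_mem, Set.indicator_of_notMem, hu, hu.ne']
      rw [hφu]
      have h1 : Tendsto (fun n => t n * h u) atTop (nhds 0) := by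
        simpa using ht.mul_const (h u)
      have h2 : ∀ᶠ n in atTop, u - R u < t n * h u :=
        h1.eventually_const_lt (by linarith)
      refine Tendsto.congr' ?_ tendsto_const_nhds
      filter_upwards [h2] with n hn
      have e1 : max (R u + t n * h u - u) 0 = R u + t n * h u - u :=
        max_eq_left (by linarith)
      have e2 : max (R u - u) 0 = R u - u := max_eq_left (by linarith)
      have : D n u = h u := by
        simp only [hD, e1, e2]
        rw [show R u + t n * h u - u - (R u - u) = t n * h u by ring,
          mul_div_cancel_left₀ _ (ht_pos n).ne']
      exact this.symm
    · -- R u = u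
      have hφu : φ u = max (h u) 0 := by
        simp [hφ, Set.indicator_of_mem, Set.indicator_of_notMem, hu.symm, lt_irrefl,
          not_lt.mpr (le_of_eq hu)]
      rw [hφu]
      refine Tendsto.congr (fun n => ?_) tendsto_const_nhds
      have e1 : R u + t n * h u - u = t n * h u := by rw [← hu]; ring
      have e2 : max (R u - u) 0 = 0 := by rw [← hu]; simp
      have e3 : max (t n * h u) 0 = t n * max (h u) 0 := by
        rw [mul_max_of_nonneg _ _ (ht_pos n).le, mul_zero]
      simp only [hD, e1, e2, e3, sub_zero]
      exact (mul_div_cancel_left₀ _ (ht_pos n).ne').symm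
    · -- R u < u
      have hφu : φ u = 0 := by
        simp [hφ, Set.indicator_of_notMem, not_lt.mpr hu.le, hu.ne]
      rw [hφu]
      have h1 : Tendsto (fun n => t n * h u) atTop (nhds 0) := by
        simpa using ht.mul_const (h u)
      have h2 : ∀ᶠ n in atTop, t n * h u < u - R u :=
        h1.eventually_lt_const (by linarith)
      refine Tendsto.congr' ?_ tendsto_const_nhds
      filter_upwards [h2] with n hn
      have e1 : max (R u + t n * h u - u) 0 = 0 := max_eq_right (by linarith)
      have e2 : max (R u - u) 0 = 0 := max_eq_right (by linarith)
      simp [hD, e1, e2]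
  -- dominated convergence for D
  have hlimD : Tendsto (fun n => ∫ u in I, D n u) atTop (nhds (∫ u in I, φ u)) := by
    refine tendsto_integral_of_dominated_convergence (fun u => |h u|)
      (fun n => (hDint n).1) hh.abs ?_ ?_
    · intro n
      refine Eventually.of_forall fun u => ?_
      have key : |max (R u + t n * h u - u) 0 - max (R u - u) 0|
          ≤ |t n * h u| := by
        have := abs_max_sub_max_le_abs (R u + t n * h u - u) (R u - u) 0
        simpa using this
      rw [Real.norm_eq_abs, hD]
      rw [abs_div, abs_of_pos (ht_pos n), div_le_iff₀ (ht_pos n)]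
      calc |max (R u + t n * h u - u) 0 - max (R u - u) 0| ≤ |t n * h u| := key
        _ = |h u| * t n := by rw [abs_mul, abs_of_pos (ht_pos n)]; ring
    · exact Eventually.of_forall hlim_pt
  -- error bound between A and D
  have herr : ∀ n, |(∫ u in I, A n u) - ∫ u in I, D n u|
      ≤ ∫ u in I, |hseq n u - h u| := by
    intro n
    rw [← integral_sub (hAint n) (hDint n)]
    have h1 : |∫ u in I, (A n u - D n u)| ≤ ∫ u in I, |A n u - D n u| := by
      simpa [Real.norm_eq_abs] using
        norm_integral_le_integral_norm (μ := volume.restrict I) (fun u => A n u - D n u)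
    refine h1.trans ?_
    refine integral_mono_of_nonneg (Eventually.of_forall fun u => abs_nonneg _)
      ((hhseq n).sub hh).abs (Eventually.of_forall fun u => ?_)
    show |A n u - D n u| ≤ |hseq n u - h u|
    have e : A n u - D n u = (max (R u + t n * hseq n u - u) 0
        - max (R u + t n * h u - u) 0) / t n := by
      rw [hA, hD, div_sub_div_same]
      ring_nf
    rw [e, abs_div, abs_of_pos (ht_pos n), div_le_iff₀ (ht_pos n)]
    calc |max (R u + t n * hseq n u - u) 0 - max (R u + t n * h u - u) 0|
        ≤ |(R u + t n * hseq n u - u) - (R u + t n * h u - u)| :=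
          abs_max_sub_max_le_abs _ _ 0
      _ = |hseq n u - h u| * t n := by
          rw [show (R u + t n * hseq n u - u) - (R u + t n * h u - u)
              = t n * (hseq n u - h u) by ring, abs_mul, abs_of_pos (ht_pos n)]; ring
  have hzero : Tendsto (fun n => (∫ u in I, A n u) - ∫ u in I, D n u) atTop (nhds 0) :=
    squeeze_zero_norm (fun n => by simpa [Real.norm_eq_abs] using herr n) hhconv
  -- identify ∫ φ with the claimed derivative
  have m1 : MeasurableSet {u : ℝ | u < R u} := measurableSet_lt measurable_id hRm
  have m2 : MeasurableSet {u : ℝ | R u = u} := measurableSet_eq_fun hRm measurable_id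
  have hφeq : ∫ u in I, φ u = (∫ u in I ∩ {u | u < R u}, h u)
      + ∫ u in I ∩ {u | R u = u}, max (h u) 0 := by
    rw [hφ, integral_add (hh.indicator m1) (hh.pos_part.indicator m2),
      setIntegral_indicator m1, setIntegral_indicator m2]
  -- put everything together
  have hmain : Tendsto (fun n => ∫ u in I, A n u) atTop
      (nhds ((∫ u in I ∩ {u | u < R u}, h u) + ∫ u in I ∩ {u | R u = u}, max (h u) 0)) := by
    have := hzero.add hlimD
    rw [zero_add] at this
    rw [← hφeq]
    refine this.congr fun n => by ring
  refine hmain.congr fun n => ?_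
  simp only [hA]
  rw [integral_div, integral_sub (hFn n _ (hhseq n)) hmax0]
end

section
/- The composition map φ(G, Q) = G ∘ Q, defined on pairs where G ∈ ℓ^∞[0,1] and Q : (0,1) → [0,1] is Borel measurable, is Hadamard differentiable tangentially to C[0,1] × L¹(0,1) at any (F, Q) such that F is the identity, with derivative φ'_{F,Q}(g, h) = g ∘ Q + h. -/
/-!
With `yₙ = Q + tₙ hₙ`, the difference quotient splits as
`(hₙ - h) + (gₙ - g) ∘ yₙ + (g ∘ yₙ - g ∘ Q)`: the first term tends to `0` in `L¹` and the
second uniformly. Since `g` is uniformly continuous and bounded on `[0,1]`, for every `ε > 0`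
there is `C` with `|g y - g x| ≤ ε + C |y - x|`, so the third term has `L¹` norm at most
`ε + C tₙ ‖hₙ‖₁`, and `‖hₙ‖₁` stays bounded.
-/

open Set Filter MeasureTheory Topology

theorem UniformContinuousOn.exists_dist_le_add_mul_dist {α β : Type*} [PseudoMetricSpace α]
    [PseudoMetricSpace β] {f : α → β} {s : Set α} (hf : UniformContinuousOn f s)
    (hbdd : Bornology.IsBounded (f '' s)) {ε : ℝ} (hε : 0 < ε) :
    ∃ C, 0 ≤ C ∧ ∀ x ∈ s, ∀ y ∈ s, dist (f x) (f y) ≤ ε + C * dist x y := by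
  obtain ⟨δ, hδ, hclose⟩ := Metric.uniformContinuousOn_iff.1 hf ε hε
  refine ⟨Metric.diam (f '' s) / δ, by positivity, fun x hx y hy => ?_⟩
  by_cases hxy : dist x y < δ
  · have := (hclose x hx y hy hxy).le
    have : 0 ≤ Metric.diam (f '' s) / δ * dist x y := by positivity
    linarith
  · calc dist (f x) (f y) ≤ Metric.diam (f '' s) :=
          Metric.dist_le_diam_of_mem hbdd (mem_image_of_mem f hx) (mem_image_of_mem f hy)
      _ = Metric.diam (f '' s) / δ * δ := (div_mul_cancel₀ _ hδ.ne').symm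
      _ ≤ ε + Metric.diam (f '' s) / δ * dist x y := by
          have : Metric.diam (f '' s) / δ * δ ≤ Metric.diam (f '' s) / δ * dist x y :=
            mul_le_mul_of_nonneg_left (not_lt.1 hxy) (by positivity)
          linarith

theorem abs_diffQuot_comp_sub_le {g G : ℝ → ℝ} {x a b t η ε C : ℝ} (ht : 0 < t)
    (hG : |G (x + t * a) - g (x + t * a)| ≤ η) (hg : |g (x + t * a) - g x| ≤ ε + C * |t * a|) :
    |((x + t * a + t * G (x + t * a)) - x) / t - (g x + b)| ≤
      |a - b| + (η + ε) + C * (t * |a|) := by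
  have hsplit : ((x + t * a + t * G (x + t * a)) - x) / t - (g x + b) =
      (a - b) + (G (x + t * a) - g (x + t * a)) + (g (x + t * a) - g x) := by
    field_simp
    ring
  rw [abs_mul, abs_of_pos ht] at hg
  rw [hsplit]
  calc _ ≤ |a - b| + |G (x + t * a) - g (x + t * a)| + |g (x + t * a) - g x| :=
        abs_add_three _ _ _
    _ ≤ _ := by linarith

section SetIntegral

variable {α : Type*} [MeasurableSpace α] {μ : Measure α} {s : Set α}

theorem setIntegral_abs_le_of_abs_le {F a b : α → ℝ} {c D : ℝ} (hs : MeasurableSet s)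
    (hμs : μ s ≠ ⊤) (ha : IntegrableOn a s μ) (hb : IntegrableOn b s μ)
    (hF : ∀ u ∈ s, |F u| ≤ |a u - b u| + c + D * |a u|) :
    ∫ u in s, |F u| ∂μ ≤ ∫ u in s, |a u - b u| ∂μ + c * μ.real s + D * ∫ u in s, |a u| ∂μ := by
  have hab : IntegrableOn (fun u => |a u - b u|) s μ := (ha.sub hb).abs
  have hc : IntegrableOn (fun _ => c) s μ := integrableOn_const hμs
  calc ∫ u in s, |F u| ∂μ ≤ ∫ u in s, (|a u - b u| + c + D * |a u|) ∂μ :=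
        integral_mono_of_nonneg (ae_of_all _ fun _ => abs_nonneg _)
          ((hab.add hc).add (ha.abs.const_mul D)) ((ae_restrict_iff' hs).2 (ae_of_all _ hF))
    _ = _ := by
        rw [integral_add (f := fun u => |a u - b u| + c) (hab.add hc) (ha.abs.const_mul D),
          integral_add hab hc,
          setIntegral_const, integral_const_mul, smul_eq_mul, mul_comm c]

theorem tendsto_mul_setIntegral_abs_of_tendsto {f : ℕ → α → ℝ} {f₀ : α → ℝ}
    (hf : ∀ n, IntegrableOn (f n) s μ) (hf₀ : IntegrableOn f₀ s μ)
    (hconv : Tendsto (fun n => ∫ u in s, |f n u - f₀ u| ∂μ) atTop (𝓝 0))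
    {t : ℕ → ℝ} (ht₀ : ∀ n, 0 ≤ t n) (ht : Tendsto t atTop (𝓝 0)) :
    Tendsto (fun n => t n * ∫ u in s, |f n u| ∂μ) atTop (𝓝 0) := by
  have hbound : ∀ n, ∫ u in s, |f n u| ∂μ ≤ ∫ u in s, |f₀ u| ∂μ + ∫ u in s, |f n u - f₀ u| ∂μ :=
    fun n => by
      rw [← integral_add (g := fun u => |f n u - f₀ u|) hf₀.abs ((hf n).sub hf₀).abs]
      refine integral_mono (hf n).abs (hf₀.abs.add ((hf n).sub hf₀).abs) fun u => ?_
      simpa using abs_add_le (f₀ u) (f n u - f₀ u)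
  have hupper : Tendsto (fun n => t n * (∫ u in s, |f₀ u| ∂μ + ∫ u in s, |f n u - f₀ u| ∂μ))
      atTop (𝓝 0) := by
    simpa using ht.mul (tendsto_const_nhds.add hconv)
  exact squeeze_zero (fun n => mul_nonneg (ht₀ n) (integral_nonneg fun _ => abs_nonneg _))
    (fun n => mul_le_mul_of_nonneg_left (hbound n) (ht₀ n)) hupper

end SetIntegral

theorem stmt9_general (Q g : ℝ → ℝ)
    (hQmap : ∀ u ∈ Ioo (0:ℝ) 1, Q u ∈ Icc (0:ℝ) 1)
    (hgc : ContinuousOn g (Icc (0:ℝ) 1))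
    (t : ℕ → ℝ) (ht_pos : ∀ n, 0 < t n)
    (ht : Tendsto t atTop (nhds 0))
    (gseq : ℕ → ℝ → ℝ)
    (hgseq : TendstoUniformlyOn gseq g atTop (Icc (0:ℝ) 1))
    (h : ℝ → ℝ) (hh : IntegrableOn h (Ioo (0:ℝ) 1))
    (hseq : ℕ → ℝ → ℝ) (hhseq : ∀ n, IntegrableOn (hseq n) (Ioo (0:ℝ) 1))
    (hhconv : Tendsto (fun n => ∫ u in Ioo (0:ℝ) 1, |hseq n u - h u|) atTop (nhds 0))
    (hmap : ∀ n, ∀ u ∈ Ioo (0:ℝ) 1, Q u + t n * hseq n u ∈ Icc (0:ℝ) 1) :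
    Tendsto (fun n => ∫ u in Ioo (0:ℝ) 1,
        |((Q u + t n * hseq n u + t n * gseq n (Q u + t n * hseq n u)) - Q u) / t n
          - (g (Q u) + h u)|) atTop (nhds 0) := by
  refine tendsto_order.2 ⟨fun a ha => Eventually.of_forall fun n =>
    ha.trans_le (integral_nonneg fun _ => abs_nonneg _), fun a ha => ?_⟩
  obtain ⟨C, -, hmod⟩ :=
    (isCompact_Icc.uniformContinuousOn_of_continuous hgc).exists_dist_le_add_mul_dist
      (isCompact_Icc.image_of_continuousOn hgc).isBounded (by positivity : 0 < a / 3)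
  have hsmall : Tendsto (fun n => (∫ u in Ioo (0:ℝ) 1, |hseq n u - h u|) +
      C * (t n * ∫ u in Ioo (0:ℝ) 1, |hseq n u|)) atTop (𝓝 0) := by
    simpa using hhconv.add ((tendsto_mul_setIntegral_abs_of_tendsto hhseq hh hhconv
      (fun n => (ht_pos n).le) ht).const_mul C)
  filter_upwards [(tendsto_order.1 hsmall).2 (a / 3) (by positivity),
    Metric.tendstoUniformlyOn_iff.1 hgseq (a / 3) (by positivity)] with n hsmall_n hunif_n
  have hpoint : ∀ u ∈ Ioo (0:ℝ) 1,
      |((Q u + t n * hseq n u + t n * gseq n (Q u + t n * hseq n u)) - Q u) / t n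
        - (g (Q u) + h u)| ≤ |hseq n u - h u| + (a / 3 + a / 3) + C * (t n * |hseq n u|) :=
    fun u hu => abs_diffQuot_comp_sub_le (ht_pos n)
      (by simpa [abs_sub_comm, Real.dist_eq] using (hunif_n _ (hmap n u hu)).le)
      (by simpa [Real.dist_eq] using hmod _ (hmap n u hu) _ (hQmap u hu))
  calc _ ≤ _ := setIntegral_abs_le_of_abs_le (c := a / 3 + a / 3) (D := C * t n)
        measurableSet_Ioo (by simp) (hhseq n) hh
        (fun u hu => (hpoint u hu).trans_eq (by ring))
    _ < a := by
        simp only [Real.volume_real_Ioo, sub_zero, zero_le_one, max_eq_left, mul_one, mul_assoc]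
        linarith

/-- Hadamard differentiability (tangentially to `C[0,1] × L¹(0,1)`)
of the composition map `φ(G, Q) = G ∘ Q` at `(F, Q)` with `F = id`:
for all `tₙ ↓ 0`, `gₙ → g` uniformly on `[0,1]` with `g` continuous, and
`hₙ → h` in `L¹(0,1)` with `Q + tₙ hₙ` mapping into `[0,1]`, one has
`‖((F + tₙ gₙ) ∘ (Q + tₙ hₙ) − F ∘ Q)/tₙ − (g ∘ Q + h)‖₁ → 0`. -/
theorem stmt9 (Q g : ℝ → ℝ) (hQm : Measurable Q) (hgm : Measurable g)
    (hQmap : ∀ u ∈ Ioo (0:ℝ) 1, Q u ∈ Icc (0:ℝ) 1)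
    (hgc : ContinuousOn g (Icc (0:ℝ) 1))
    (t : ℕ → ℝ) (ht_pos : ∀ n, 0 < t n) (ht_anti : Antitone t)
    (ht : Tendsto t atTop (nhds 0))
    (gseq : ℕ → ℝ → ℝ) (hgseqm : ∀ n, Measurable (gseq n))
    (hgseq : TendstoUniformlyOn gseq g atTop (Icc (0:ℝ) 1))
    (h : ℝ → ℝ) (hh : IntegrableOn h (Ioo (0:ℝ) 1))
    (hseq : ℕ → ℝ → ℝ) (hhseq : ∀ n, IntegrableOn (hseq n) (Ioo (0:ℝ) 1))
    (hhconv : Tendsto (fun n => ∫ u in Ioo (0:ℝ) 1, |hseq n u - h u|) atTop (nhds 0))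
    (hmap : ∀ n, ∀ u ∈ Ioo (0:ℝ) 1, Q u + t n * hseq n u ∈ Icc (0:ℝ) 1) :
    Tendsto (fun n => ∫ u in Ioo (0:ℝ) 1,
        |((Q u + t n * hseq n u + t n * gseq n (Q u + t n * hseq n u)) - Q u) / t n
          - (g (Q u) + h u)|) atTop (nhds 0) :=
  stmt9_general Q g hQmap hgc t ht_pos ht gseq hgseq h hh hseq hhseq hhconv hmap
end

section
/- If a bivariate copula C has maximal correlation strictly less than one, then C(u, u) < u for all u ∈ (0,1). -/
/-!
If `C(u,u) = u`, the events `{U ≤ u}` and `{V ≤ u}` have the same probability `u` as their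
intersection, so they coincide almost surely. The indicator of `(-∞, u]` then turns `U` and `V`
into almost surely equal Bernoulli(`u`) variables, which are nondegenerate and have correlation `1`.
-/

open Set MeasureTheory ProbabilityTheory

section

variable {Ω : Type*} [MeasurableSpace Ω] {μ : Measure Ω}

lemma measureReal_preimage_Iic_of_map_eq_uniform [IsProbabilityMeasure μ] {W : Ω → ℝ}
    (hW : Measurable W) (hWunif : μ.map W = volume.restrict (Ioo (0:ℝ) 1))
    {u : ℝ} (hu0 : 0 ≤ u) (hu1 : u < 1) :
    μ.real (W ⁻¹' Iic u) = u := by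
  have hinter : Iic u ∩ Ioo (0:ℝ) 1 = Ioc 0 u := by
    ext x
    simp only [mem_inter_iff, mem_Iic, mem_Ioo, mem_Ioc]
    constructor
    · rintro ⟨hxu, hx0, -⟩; exact ⟨hx0, hxu⟩
    · rintro ⟨hx0, hxu⟩; exact ⟨hxu, hx0, hxu.trans_lt hu1⟩
  rw [← map_measureReal_apply hW measurableSet_Iic, hWunif,
    measureReal_restrict_apply measurableSet_Iic, hinter, Real.volume_real_Ioc_of_le hu0, sub_zero]

lemma ae_eq_of_measureReal_le_inter [IsFiniteMeasure μ] {s t : Set Ω}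
    (hs : NullMeasurableSet s μ) (ht : NullMeasurableSet t μ)
    (hst : μ.real s ≤ μ.real (s ∩ t)) (hts : μ.real t ≤ μ.real (s ∩ t)) :
    s =ᵐ[μ] t :=
  have hleft : (s ∩ t : Set Ω) =ᵐ[μ] s := ae_eq_of_subset_of_measure_ge inter_subset_left
    ((ENNReal.toReal_le_toReal (measure_ne_top _ _) (measure_ne_top _ _)).1 hst)
    (hs.inter ht) (measure_ne_top _ _)
  have hright : (s ∩ t : Set Ω) =ᵐ[μ] t := ae_eq_of_subset_of_measure_ge inter_subset_right
    ((ENNReal.toReal_le_toReal (measure_ne_top _ _) (measure_ne_top _ _)).1 hts)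
    (hs.inter ht) (measure_ne_top _ _)
  hleft.symm.trans hright

lemma variance_indicator_one [IsProbabilityMeasure μ] {s : Set Ω} (hs : MeasurableSet s) :
    Var[s.indicator 1; μ] = μ.real s * (1 - μ.real s) := by
  have hsq : s.indicator (1 : Ω → ℝ) ^ 2 = s.indicator 1 := by
    ext ω; by_cases h : ω ∈ s <;> simp [h]
  have hL2 : MemLp (s.indicator (1 : Ω → ℝ)) 2 μ :=
    memLp_indicator_const 2 hs 1 (Or.inr (measure_ne_top μ s))
  rw [variance_eq_sub hL2, hsq]
  simp only [integral_indicator_one hs]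
  ring

lemma covariance_div_sqrt_variance_of_ae_eq {X Y : Ω → ℝ} (hX : AEMeasurable X μ)
    (hXY : X =ᵐ[μ] Y) (hvar : Var[X; μ] ≠ 0) :
    cov[X, Y; μ] / (√(Var[X; μ]) * √(Var[Y; μ])) = 1 := by
  have hcov : cov[X, Y; μ] = cov[X, X; μ] := by
    unfold covariance
    rw [integral_congr_ae hXY.symm]
    refine integral_congr_ae ?_
    filter_upwards [hXY] with ω hω
    rw [hω]
  rw [hcov, covariance_self hX, ← variance_congr hXY, Real.mul_self_sqrt (variance_nonneg _ _),
    div_self hvar]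

end

/-- if the copula `C` of `(U, V)` (with uniform `(0,1)` marginals) has
maximal correlation strictly less than one, then `C(u,u) < u` for all `u ∈ (0,1)`. -/
theorem stmt11 {Ω : Type*} [MeasurableSpace Ω] (P : Measure Ω) [IsProbabilityMeasure P]
    (U V : Ω → ℝ) (hU : Measurable U) (hV : Measurable V)
    (hUunif : P.map U = volume.restrict (Ioo (0:ℝ) 1))
    (hVunif : P.map V = volume.restrict (Ioo (0:ℝ) 1))
    (hmaxcor : ∃ ρ : ℝ, ρ < 1 ∧ ∀ f g : ℝ → ℝ, Measurable f → Measurable g →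
      MemLp (fun ω => f (U ω)) 2 P → MemLp (fun ω => g (V ω)) 2 P →
      0 < variance (fun ω => f (U ω)) P → 0 < variance (fun ω => g (V ω)) P →
      (∫ ω, (f (U ω) - ∫ ω', f (U ω') ∂P) * (g (V ω) - ∫ ω', g (V ω') ∂P) ∂P)
        / (Real.sqrt (variance (fun ω => f (U ω)) P)
            * Real.sqrt (variance (fun ω => g (V ω)) P)) ≤ ρ) :
    ∀ u ∈ Ioo (0:ℝ) 1, (P {ω | U ω ≤ u ∧ V ω ≤ u}).toReal < u := by
  obtain ⟨ρ, hρ, hcorr⟩ := hmaxcor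
  rintro u ⟨hu0, hu1⟩
  by_contra! hdiag
  set A := U ⁻¹' Iic u
  set B := V ⁻¹' Iic u
  have hA : MeasurableSet A := hU measurableSet_Iic
  have hB : MeasurableSet B := hV measurableSet_Iic
  have hPA : P.real A = u := measureReal_preimage_Iic_of_map_eq_uniform hU hUunif hu0.le hu1
  have hPB : P.real B = u := measureReal_preimage_Iic_of_map_eq_uniform hV hVunif hu0.le hu1
  have hAB : A =ᵐ[P] B := ae_eq_of_measureReal_le_inter hA.nullMeasurableSet
    hB.nullMeasurableSet (hPA ▸ hdiag) (hPB ▸ hdiag)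
  have hAB1 : A.indicator (1 : Ω → ℝ) =ᵐ[P] B.indicator 1 := indicator_ae_eq_of_ae_eq_set hAB
  have hvarA : 0 < Var[A.indicator 1; P] := by
    rw [variance_indicator_one hA, hPA]
    exact mul_pos hu0 (sub_pos.2 hu1)
  have hvarB : 0 < Var[B.indicator 1; P] := variance_congr hAB1 ▸ hvarA
  have hf : Measurable ((Iic u).indicator (1 : ℝ → ℝ)) :=
    measurable_one.indicator measurableSet_Iic
  -- `(Iic u).indicator 1 ∘ U` is `A.indicator 1` by unfolding, so `hcorr` applies as stated.
  have hcorrAB : cov[A.indicator 1, B.indicator 1; P]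
      / (√(Var[A.indicator 1; P]) * √(Var[B.indicator 1; P])) ≤ ρ :=
    hcorr _ _ hf hf (memLp_indicator_const 2 hA 1 (Or.inr (measure_ne_top P A)))
      (memLp_indicator_const 2 hB 1 (Or.inr (measure_ne_top P B))) hvarA hvarB
  rw [covariance_div_sqrt_variance_of_ae_eq (measurable_one.indicator hA).aemeasurable hAB1
    hvarA.ne'] at hcorrAB
  linarith
end

section
/- Let ξ be a real random variable whose CDF is continuous and strictly increasing at its (1−α)-quantile c, and suppose random variables ĉ_n → c in probability and S_n ⇒ ξ in distribution. Then P(S_n > ĉ_n) → 1 − P(ξ ≤ c) = α. -/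
open Set Filter MeasureTheory

/-!
The CDF `F` is continuous at `c`, so `F c = 1 - α` and it suffices to show
`P(Sₙ ≤ ĉₙ) → F c`. For continuity points `x₁ < c < x₂` of `F`,
`P(Sₙ ≤ x₁) - P(|ĉₙ - c| ≥ c - x₁) ≤ P(Sₙ ≤ ĉₙ) ≤ P(Sₙ ≤ x₂) + P(|ĉₙ - c| ≥ x₂ - c)`,
and the two bounds tend to `F x₁` and `F x₂`; since continuity points of a monotone function
are dense, these can be chosen arbitrarily close to `F c`.
-/

open scoped Topology
open ProbabilityTheory

theorem Monotone.dense_setOf_continuousAt {F : ℝ → ℝ} (hF : Monotone F) :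
    Dense {x | ContinuousAt F x} := by
  simpa only [compl_ofPred, not_not] using hF.countable_not_continuousAt.dense_compl ℝ

section Quantile

variable {F : ℝ → ℝ} {p : ℝ}

theorem Monotone.le_apply_csInf_setOf_le (hF : Monotone F) (hne : {x | p ≤ F x}.Nonempty)
    (hbdd : BddBelow {x | p ≤ F x})
    (hc : ContinuousWithinAt F (Ioi (sInf {x | p ≤ F x})) (sInf {x | p ≤ F x})) :
    p ≤ F (sInf {x | p ≤ F x}) := by
  refine _root_.ge_of_tendsto hc (eventually_nhdsWithin_of_forall fun t ht => ?_)
  obtain ⟨a, ha, hat⟩ := (csInf_lt_iff hbdd hne).mp ht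
  exact ha.trans (hF hat.le)

theorem apply_csInf_setOf_le_le (hbdd : BddBelow {x | p ≤ F x})
    (hc : ContinuousWithinAt F (Iio (sInf {x | p ≤ F x})) (sInf {x | p ≤ F x})) :
    F (sInf {x | p ≤ F x}) ≤ p :=
  le_of_tendsto hc <| eventually_nhdsWithin_of_forall fun _ ht =>
    le_of_lt <| not_le.mp fun h => (csInf_le hbdd h).not_gt ht

theorem ProbabilityTheory.cdf_csInf_setOf_le_cdf (ν : Measure ℝ) [IsProbabilityMeasure ν]
    (hp₀ : 0 < p) (hp₁ : p < 1)
    (hc : ContinuousAt (cdf ν) (sInf {x | p ≤ cdf ν x})) :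
    cdf ν (sInf {x | p ≤ cdf ν x}) = p := by
  have hne : {x | p ≤ cdf ν x}.Nonempty :=
    ((tendsto_cdf_atTop ν).eventually (eventually_ge_nhds hp₁)).exists
  have hbdd : BddBelow {x | p ≤ cdf ν x} := by
    obtain ⟨b, hb⟩ := ((tendsto_cdf_atBot ν).eventually (eventually_lt_nhds hp₀)).exists
    exact ⟨b, fun x hx => le_of_not_gt fun hxb => (hx.trans (monotone_cdf ν hxb.le)).not_gt hb⟩
  exact le_antisymm (apply_csInf_setOf_le_le hbdd hc.continuousWithinAt)
    ((monotone_cdf ν).le_apply_csInf_setOf_le hne hbdd hc.continuousWithinAt)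

end Quantile

section Slutsky

variable {Ω : Type*} [MeasurableSpace Ω] {P : Measure Ω} [IsFiniteMeasure P]

theorem measureReal_le_le_add (S ch : Ω → ℝ) {c x : ℝ} :
    P.real {ω | S ω ≤ ch ω} ≤ P.real {ω | S ω ≤ x} + P.real {ω | x - c ≤ |ch ω - c|} := by
  refine (measureReal_mono fun ω (hω : S ω ≤ ch ω) => ?_).trans (measureReal_union_le _ _)
  refine (le_or_gt (S ω) x).imp id fun hx => ?_
  exact (by linarith : x - c ≤ ch ω - c).trans (le_abs_self _)

theorem measureReal_le_sub_le (S ch : Ω → ℝ) {c x : ℝ} :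
    P.real {ω | S ω ≤ x} - P.real {ω | c - x ≤ |ch ω - c|} ≤ P.real {ω | S ω ≤ ch ω} := by
  refine sub_le_iff_le_add.mpr <|
    (measureReal_mono fun ω (hω : S ω ≤ x) => ?_).trans (measureReal_union_le _ _)
  refine (le_or_gt (S ω) (ch ω)).imp id fun hch => ?_
  exact (by linarith : c - x ≤ -(ch ω - c)).trans (neg_le_abs _)

/-- Slutsky's lemma for the event `{Sₙ ≤ ĉₙ}`, with convergence in distribution of `Sₙ`
expressed through a monotone limit function `F` at its continuity points. -/
theorem tendsto_measureReal_le_of_tendsto {ι : Type*} {l : Filter ι} {F : ℝ → ℝ}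
    (hF : Monotone F) {c : ℝ} (hFc : ContinuousAt F c) {S ch : ι → Ω → ℝ}
    (hdist : ∀ x, ContinuousAt F x → Tendsto (fun n => P.real {ω | S n ω ≤ x}) l (𝓝 (F x)))
    (hprob : ∀ ε > 0, Tendsto (fun n => P.real {ω | ε ≤ |ch n ω - c|}) l (𝓝 0)) :
    Tendsto (fun n => P.real {ω | S n ω ≤ ch n ω}) l (𝓝 (F c)) := by
  rw [tendsto_order]
  constructor
  · intro a ha
    obtain ⟨u, hu, huF⟩ :=
      exists_Ioc_subset_of_mem_nhds (hFc.eventually (eventually_gt_nhds ha)) (exists_lt c)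
    obtain ⟨x, hxF, hux, hxc⟩ := hF.dense_setOf_continuousAt.exists_between hu
    have hlim := (hdist x hxF).sub (hprob (c - x) (sub_pos.mpr hxc))
    rw [sub_zero] at hlim
    filter_upwards [hlim.eventually (eventually_gt_nhds (huF ⟨hux, hxc.le⟩))] with n hn
    exact hn.trans_le (measureReal_le_sub_le (S n) (ch n))
  · intro b hb
    obtain ⟨u, hu, huF⟩ :=
      exists_Ico_subset_of_mem_nhds (hFc.eventually (eventually_lt_nhds hb)) (exists_gt c)
    obtain ⟨x, hxF, hcx, hxu⟩ := hF.dense_setOf_continuousAt.exists_between hu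
    have hlim := (hdist x hxF).add (hprob (x - c) (sub_pos.mpr hcx))
    rw [add_zero] at hlim
    filter_upwards [hlim.eventually (eventually_lt_nhds (huF ⟨hcx.le, hxu⟩))] with n hn
    exact (measureReal_le_le_add (S n) (ch n)).trans_lt hn

end Slutsky

theorem stmt16_general {Ω : Type*} [MeasurableSpace Ω] (P : Measure Ω) [IsProbabilityMeasure P]
    (ν : Measure ℝ) [IsProbabilityMeasure ν]
    (F : ℝ → ℝ) (hF : ∀ x, F x = (ν (Iic x)).toReal)
    (α : ℝ) (hα : α ∈ Ioo (0:ℝ) 1)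
    (c : ℝ) (hc : c = sInf {x : ℝ | 1 - α ≤ F x})
    (hFc : ContinuousAt F c)
    (S ch : ℕ → Ω → ℝ) (hS : ∀ n, Measurable (S n)) (hch : ∀ n, Measurable (ch n))
    (hdist : ∀ x : ℝ, ContinuousAt F x →
      Tendsto (fun n => (P {ω | S n ω ≤ x}).toReal) atTop (nhds (F x)))
    (hprob : ∀ ε > 0, Tendsto (fun n => (P {ω | ε ≤ |ch n ω - c|}).toReal) atTop (nhds 0)) :
    Tendsto (fun n => (P {ω | ch n ω < S n ω}).toReal) atTop (nhds (1 - F c)) ∧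
      1 - F c = α := by
  obtain rfl : F = cdf ν := funext fun x => by rw [hF, cdf_eq_real, measureReal_def]
  have hFc_eq : cdf ν c = 1 - α := by
    subst hc
    exact cdf_csInf_setOf_le_cdf ν (by linarith [hα.2]) (by linarith [hα.1]) hFc
  refine ⟨?_, by linarith⟩
  simp only [← measureReal_def] at hdist hprob ⊢
  have hle := tendsto_measureReal_le_of_tendsto (monotone_cdf ν) hFc hdist hprob
  refine (hle.const_sub 1).congr fun n => ?_
  rw [← probReal_compl_eq_one_sub (measurableSet_le (hS n) (hch n))]
  simp only [compl_ofPred, not_le]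

/-- if the CDF `F` of `ξ` (law `ν`) is continuous and strictly
increasing at its `(1−α)`-quantile `c`, `ĉₙ → c` in probability and `Sₙ ⇒ ξ`
in distribution, then `P(Sₙ > ĉₙ) → 1 − P(ξ ≤ c) = α`. -/
theorem stmt16 {Ω : Type*} [MeasurableSpace Ω] (P : Measure Ω) [IsProbabilityMeasure P]
    (ν : Measure ℝ) [IsProbabilityMeasure ν]
    (F : ℝ → ℝ) (hF : ∀ x, F x = (ν (Iic x)).toReal)
    (α : ℝ) (hα : α ∈ Ioo (0:ℝ) 1)
    (c : ℝ) (hc : c = sInf {x : ℝ | 1 - α ≤ F x})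
    (hFc : ContinuousAt F c)
    (hFs : ∃ ε > 0, StrictMonoOn F (Ioo (c - ε) (c + ε)))
    (S ch : ℕ → Ω → ℝ) (hS : ∀ n, Measurable (S n)) (hch : ∀ n, Measurable (ch n))
    (hdist : ∀ x : ℝ, ContinuousAt F x →
      Tendsto (fun n => (P {ω | S n ω ≤ x}).toReal) atTop (nhds (F x)))
    (hprob : ∀ ε > 0, Tendsto (fun n => (P {ω | ε ≤ |ch n ω - c|}).toReal) atTop (nhds 0)) :
    Tendsto (fun n => (P {ω | ch n ω < S n ω}).toReal) atTop (nhds (1 - F c)) ∧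
      1 - F c = α :=
  stmt16_general P ν F hF α hα c hc hFc S ch hS hch hdist hprob
end
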